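/- Let 𝒜 be a unital ∗-algebra over ℂ and let Φ : 𝒜 → 𝒜 be a nonlinear ⋄-derivation such that Φ(I/2) and Φ(iI/2) are self-adjoint. Then Φ(−I/2) = 0. -/

import Mathlib

/-!
On scalar multiples of the unit, `(a • 1) ⋄ (b • 1) = (star a * b - star b * a) • 1`, so the
derivation identity for such pairs only involves the values of `Φ` at scalars. The pair
`(I/2, iI/2)` gives `Φ(iI/2) = i Φ(I/2)`, and two self-adjoint elements differing by a factor `i`
vanish. With `Φ(I/2) = Φ(iI/2) = 0`, the pairs `(iI/2, I/2)` and `(−I/2, iI/2)` show that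
`Φ(−I/2)` is skew-adjoint, and the pair `(I/2, −I/2)` (whose product is `0`) that it is
self-adjoint.
-/

open Complex

def IsDiamondDerivation {𝒜 : Type*} [Ring 𝒜] [StarRing 𝒜] (Φ : 𝒜 → 𝒜) : Prop :=
  ∀ A B : 𝒜, Φ (star A * B - star B * A) =
    (star (Φ A) * B - star B * Φ A) + (star A * Φ B - star (Φ B) * A)

theorem eq_zero_of_star_eq_self_of_star_eq_neg {M : Type*} [AddCommGroup M] [Module ℂ M]
    [Star M] {x : M} (hsa : star x = x) (hskew : star x = -x) : x = 0 := by
  have h : (2 : ℂ) • x = 0 := by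
    rw [two_smul]
    nth_rewrite 1 [← hsa]
    rw [hskew, neg_add_cancel]
  exact (smul_eq_zero.mp h).resolve_left two_ne_zero

theorem eq_zero_of_star_eq_self_of_star_I_smul_eq_self {M : Type*} [AddCommGroup M]
    [StarAddMonoid M] [Module ℂ M] [StarModule ℂ M] {x : M} (hx : star x = x)
    (hIx : star (I • x) = I • x) : x = 0 := by
  have h : I • x = 0 := by
    refine eq_zero_of_star_eq_self_of_star_eq_neg hIx ?_
    rw [star_smul, hx, Complex.star_def, conj_I, neg_smul]
  exact (smul_eq_zero.mp h).resolve_left I_ne_zero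

theorem Complex.star_I_div_two : star (I / 2) = -I / 2 := by
  simp [conj_I, neg_div]

namespace IsDiamondDerivation

variable {𝒜 : Type*} [Ring 𝒜] [StarRing 𝒜] {Φ : 𝒜 → 𝒜} (hΦ : IsDiamondDerivation Φ)
include hΦ

theorem map_zero : Φ 0 = 0 := by simpa using hΦ 0 0

variable [Algebra ℂ 𝒜] [StarModule ℂ 𝒜]

theorem map_smul_one (a b : ℂ) :
    Φ ((star a * b - star b * a) • 1) =
      b • star (Φ (a • 1)) - star b • Φ (a • 1) + (star a • Φ (b • 1) - a • star (Φ (b • 1))) := by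
  have h := hΦ (a • 1) (b • 1)
  simp only [star_smul, star_one, mul_one, one_mul, smul_mul_assoc, mul_smul_comm] at h
  rw [← h, smul_smul, smul_smul, mul_comm b, mul_comm a, sub_smul]

theorem map_half_smul_one_eq_zero_and_map_I_div_two_smul_one_eq_zero
    (h1 : star (Φ ((1 / 2 : ℂ) • 1)) = Φ ((1 / 2 : ℂ) • 1))
    (h2 : star (Φ ((I / 2) • 1)) = Φ ((I / 2) • 1)) :
    Φ ((1 / 2 : ℂ) • 1) = 0 ∧ Φ ((I / 2) • 1) = 0 := by
  have hI : Φ ((I / 2) • 1) = I • Φ ((1 / 2 : ℂ) • 1) := by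
    have h := hΦ.map_smul_one (1 / 2) (I / 2)
    rw [show star (1 / 2 : ℂ) = 1 / 2 by simp, star_I_div_two, h1, h2,
      show (1 / 2 * (I / 2) - -I / 2 * (1 / 2) : ℂ) = I / 2 by ring] at h
    rw [h]
    module
  have hhalf : Φ ((1 / 2 : ℂ) • 1) = 0 :=
    eq_zero_of_star_eq_self_of_star_I_smul_eq_self h1 (by rw [← hI, h2])
  exact ⟨hhalf, by rw [hI, hhalf, smul_zero]⟩

theorem star_map_neg_half_smul_one_eq_neg (hhalf : Φ ((1 / 2 : ℂ) • 1) = 0)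
    (hIhalf : Φ ((I / 2) • 1) = 0) :
    star (Φ ((-1 / 2 : ℂ) • 1)) = -Φ ((-1 / 2 : ℂ) • 1) := by
  have hnegI : Φ ((-I / 2) • 1) = 0 := by
    have h := hΦ.map_smul_one (I / 2) (1 / 2)
    rw [show star (1 / 2 : ℂ) = 1 / 2 by simp, star_I_div_two, hhalf, hIhalf,
      show (-I / 2 * (1 / 2) - 1 / 2 * (I / 2) : ℂ) = -I / 2 by ring] at h
    simpa using h
  have h := hΦ.map_smul_one (-1 / 2) (I / 2)
  rw [show star (-1 / 2 : ℂ) = -1 / 2 by simp, star_I_div_two, hIhalf, star_zero,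
    show (-1 / 2 * (I / 2) - -I / 2 * (-1 / 2) : ℂ) = -I / 2 by ring, hnegI] at h
  have h' : (I / 2) • (star (Φ ((-1 / 2 : ℂ) • 1)) + Φ ((-1 / 2 : ℂ) • 1)) = 0 := by
    linear_combination (norm := module) -h
  exact eq_neg_of_add_eq_zero_left ((smul_eq_zero.mp h').resolve_left (by simp))

theorem star_map_neg_half_smul_one_eq_self (hhalf : Φ ((1 / 2 : ℂ) • 1) = 0) :
    star (Φ ((-1 / 2 : ℂ) • 1)) = Φ ((-1 / 2 : ℂ) • 1) := by
  have h := hΦ.map_smul_one (1 / 2) (-1 / 2)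
  rw [show star (1 / 2 : ℂ) = 1 / 2 by simp, show star (-1 / 2 : ℂ) = -1 / 2 by simp, hhalf,
    star_zero, show (1 / 2 * (-1 / 2) - -1 / 2 * (1 / 2) : ℂ) = 0 by ring, zero_smul,
    hΦ.map_zero] at h
  have h' : (1 / 2 : ℂ) • (Φ ((-1 / 2 : ℂ) • 1) - star (Φ ((-1 / 2 : ℂ) • 1))) = 0 := by
    linear_combination (norm := module) -h
  exact (sub_eq_zero.mp ((smul_eq_zero.mp h').resolve_left (by norm_num))).symm

end IsDiamondDerivation

/-- If `Φ` is a nonlinear `⋄`-derivation on a unital ∗-algebra over `ℂ`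
with `Φ(I/2)` and `Φ(iI/2)` self-adjoint, then `Φ(−I/2) = 0`. -/
theorem stmt2 {𝒜 : Type*} [Ring 𝒜] [Algebra ℂ 𝒜] [StarRing 𝒜] [StarModule ℂ 𝒜]
    (Φ : 𝒜 → 𝒜)
    (hΦ : ∀ A B : 𝒜, Φ (star A * B - star B * A) =
      (star (Φ A) * B - star B * Φ A) + (star A * Φ B - star (Φ B) * A))
    (h1 : star (Φ (((1 : ℂ)/2) • (1 : 𝒜))) = Φ (((1 : ℂ)/2) • (1 : 𝒜)))
    (h2 : star (Φ ((Complex.I/2) • (1 : 𝒜))) = Φ ((Complex.I/2) • (1 : 𝒜))) :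
    Φ ((-(1 : ℂ)/2) • (1 : 𝒜)) = 0 := by
  have hΦ : IsDiamondDerivation Φ := hΦ
  obtain ⟨hhalf, hIhalf⟩ := hΦ.map_half_smul_one_eq_zero_and_map_I_div_two_smul_one_eq_zero h1 h2
  exact eq_zero_of_star_eq_self_of_star_eq_neg (hΦ.star_map_neg_half_smul_one_eq_self hhalf)
    (hΦ.star_map_neg_half_smul_one_eq_neg hhalf hIhalf)
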